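/- The environment-worst-case risk of a linear predictor h(x) = a·X_C + b·X_S under sign-flipping spurious correlation equals (a−c)²·Var(X_C) + (1+|b|)²·Var(X_S) + σ², and is uniquely minimized over (a,b) at (c, 0). -/

import Mathlib

/-!
Independence makes `X_C`, `X_S`, `ε` pairwise uncorrelated, so the risk in environment `s` is
`(a - c)² v_C + (s - b)² v_S + σ²`. The worse of `s = ±1` is the sign opposite to `b`, which
turns `(s - b)²` into `(1 + |b|)²`; this is at least `1`, with equality only at `b = 0`.
-/

open MeasureTheory ProbabilityTheory

section LinearCombination

variable {Ω : Type*} [MeasurableSpace Ω] {μ : Measure Ω} {X Y Z : Ω → ℝ}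

lemma variance_linear_comb_of_covariance_eq_zero [IsFiniteMeasure μ]
    (hX : MemLp X 2 μ) (hY : MemLp Y 2 μ) (hZ : MemLp Z 2 μ)
    (hXY : cov[X, Y; μ] = 0) (hXZ : cov[X, Z; μ] = 0) (hYZ : cov[Y, Z; μ] = 0) (p q : ℝ) :
    Var[p • X + q • Y + Z; μ] = p ^ 2 * Var[X; μ] + q ^ 2 * Var[Y; μ] + Var[Z; μ] := by
  have hpX := hX.const_smul p
  have hqY := hY.const_smul q
  rw [variance_add (hpX.add hqY) hZ, variance_add hpX hqY, covariance_add_left hpX hqY hZ,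
    covariance_smul_left, covariance_smul_left, covariance_smul_left, covariance_smul_right,
    variance_smul, variance_smul, hXY, hXZ, hYZ]
  ring

lemma integral_sq_linear_comb_of_covariance_eq_zero [IsProbabilityMeasure μ]
    (hX : MemLp X 2 μ) (hY : MemLp Y 2 μ) (hZ : MemLp Z 2 μ)
    (hXm : ∫ ω, X ω ∂μ = 0) (hYm : ∫ ω, Y ω ∂μ = 0) (hZm : ∫ ω, Z ω ∂μ = 0)
    (hXY : cov[X, Y; μ] = 0) (hXZ : cov[X, Z; μ] = 0) (hYZ : cov[Y, Z; μ] = 0) (p q : ℝ) :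
    ∫ ω, (p * X ω + q * Y ω + Z ω) ^ 2 ∂μ
      = p ^ 2 * Var[X; μ] + q ^ 2 * Var[Y; μ] + Var[Z; μ] := by
  have hpX := (hX.integrable one_le_two).smul p
  have hqY := (hY.integrable one_le_two).smul q
  have hZ1 := hZ.integrable one_le_two
  have hmean : μ[p • X + q • Y + Z] = 0 := by
    rw [integral_add' (hpX.add hqY) hZ1, integral_add' hpX hqY]
    simp [integral_const_mul, hXm, hYm, hZm]
  calc ∫ ω, (p * X ω + q * Y ω + Z ω) ^ 2 ∂μ = Var[p • X + q • Y + Z; μ] :=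
        (variance_of_integral_eq_zero ((hpX.add hqY).add hZ1).aemeasurable hmean).symm
    _ = p ^ 2 * Var[X; μ] + q ^ 2 * Var[Y; μ] + Var[Z; μ] :=
        variance_linear_comb_of_covariance_eq_zero hX hY hZ hXY hXZ hYZ p q

end LinearCombination

lemma max_one_sub_sq_neg_one_sub_sq (b : ℝ) :
    max ((1 - b) ^ 2) ((-1 - b) ^ 2) = (1 + |b|) ^ 2 := by
  rcases le_or_gt 0 b with hb | hb
  · rw [abs_of_nonneg hb, max_eq_right (by nlinarith)]
    ring
  · rw [abs_of_neg hb, max_eq_left (by nlinarith)]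
    ring

lemma le_sq_mul_add_one_add_abs_sq_mul {u v : ℝ} (hu : 0 ≤ u) (hv : 0 ≤ v) (x y : ℝ) :
    v ≤ x ^ 2 * u + (1 + |y|) ^ 2 * v := by
  have : 1 ≤ (1 + |y|) ^ 2 := one_le_pow₀ (le_add_of_nonneg_right (abs_nonneg y))
  nlinarith [mul_nonneg (sq_nonneg x) hu]

lemma eq_zero_of_sq_mul_add_one_add_abs_sq_mul_eq {u v x y : ℝ} (hu : 0 < u) (hv : 0 < v)
    (h : x ^ 2 * u + (1 + |y|) ^ 2 * v = v) : x = 0 ∧ y = 0 := by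
  have hx : x ^ 2 * u = 0 := by
    nlinarith [mul_nonneg (sq_nonneg x) hu.le, mul_nonneg (abs_nonneg y) hv.le,
      mul_nonneg (sq_nonneg |y|) hv.le]
  have hy : |y| * (2 + |y|) * v = 0 := by linear_combination h - hx
  refine ⟨pow_eq_zero_iff two_ne_zero |>.mp ((mul_eq_zero.mp hx).resolve_right hu.ne'), ?_⟩
  have hy' : |y| * (2 + |y|) = 0 := (mul_eq_zero.mp hy).resolve_right hv.ne'
  have h2 : 2 + |y| ≠ 0 := by positivity
  exact abs_eq_zero.mp ((mul_eq_zero.mp hy').resolve_right h2)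

theorem stmt8_general {Ω : Type*} [MeasurableSpace Ω] (μ : Measure Ω) [IsProbabilityMeasure μ]
    (XC XS ε : Ω → ℝ) (c : ℝ)
    (hIndep : iIndepFun ![XC, XS, ε] μ)
    (hC2 : MemLp XC 2 μ) (hS2 : MemLp XS 2 μ) (hε2 : MemLp ε 2 μ)
    (hCmean : ∫ ω, XC ω ∂μ = 0) (hSmean : ∫ ω, XS ω ∂μ = 0) (hεmean : ∫ ω, ε ω ∂μ = 0)
    (hVarC : 0 < variance XC μ) (hVarS : 0 < variance XS μ)
    (R : ℝ → ℝ → ℝ → ℝ)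
    (hR : R = fun se a b =>
      ∫ ω, (c * XC ω + se * XS ω + ε ω - (a * XC ω + b * XS ω)) ^ 2 ∂μ) :
    (∀ a b : ℝ, max (R 1 a b) (R (-1) a b)
        = (a - c) ^ 2 * variance XC μ + (1 + |b|) ^ 2 * variance XS μ + variance ε μ) ∧
    (∀ a b : ℝ, max (R 1 c 0) (R (-1) c 0) ≤ max (R 1 a b) (R (-1) a b)) ∧
    (∀ a b : ℝ, max (R 1 a b) (R (-1) a b) = max (R 1 c 0) (R (-1) c 0) →
      a = c ∧ b = 0) := by
  have hCS : cov[XC, XS; μ] = 0 :=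
    (hIndep.indepFun (i := 0) (j := 1) (by decide)).covariance_eq_zero hC2 hS2
  have hCε : cov[XC, ε; μ] = 0 :=
    (hIndep.indepFun (i := 0) (j := 2) (by decide)).covariance_eq_zero hC2 hε2
  have hSε : cov[XS, ε; μ] = 0 :=
    (hIndep.indepFun (i := 1) (j := 2) (by decide)).covariance_eq_zero hS2 hε2
  have hrisk (se a b : ℝ) :
      R se a b = (a - c) ^ 2 * variance XC μ + (se - b) ^ 2 * variance XS μ + variance ε μ := by
    have hresidual : (fun ω ↦ (c * XC ω + se * XS ω + ε ω - (a * XC ω + b * XS ω)) ^ 2)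
        = fun ω ↦ ((c - a) * XC ω + (se - b) * XS ω + ε ω) ^ 2 := by
      funext ω; ring
    simp only [hR]
    rw [hresidual, integral_sq_linear_comb_of_covariance_eq_zero hC2 hS2 hε2 hCmean hSmean
      hεmean hCS hCε hSε]
    ring
  have hworst (a b : ℝ) : max (R 1 a b) (R (-1) a b)
      = (a - c) ^ 2 * variance XC μ + (1 + |b|) ^ 2 * variance XS μ + variance ε μ := by
    rw [hrisk, hrisk, max_add_add_right, max_add_add_left, ← max_mul_of_nonneg _ _ hVarS.le,
      max_one_sub_sq_neg_one_sub_sq]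
  refine ⟨hworst, fun a b ↦ ?_, fun a b h ↦ ?_⟩
  · rw [hworst, hworst, sub_self, abs_zero]
    linarith [le_sq_mul_add_one_add_abs_sq_mul hVarC.le hVarS.le (a - c) b]
  · rw [hworst, hworst, sub_self, abs_zero] at h
    obtain ⟨ha, hb⟩ :=
      eq_zero_of_sq_mul_add_one_add_abs_sq_mul_eq hVarC hVarS (x := a - c) (y := b) (by linarith)
    exact ⟨sub_eq_zero.mp ha, hb⟩

/-- **Worst-case risk formula and unique minimizer.**
In the sign-flipping SCM (`X_C, X_S, ε` independent mean-zero with variances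
`v_C > 0`, `v_S > 0`, `σ²`; `Y_e = c·X_C + s_e·X_S + ε`, `s_e ∈ {±1}`), the
environment-worst-case risk of `h(x) = a·X_C + b·X_S` equals
`(a−c)²·v_C + (1+|b|)²·v_S + σ²`, and it is uniquely minimized at `(a,b) = (c,0)`. -/
theorem stmt8 {Ω : Type*} [MeasurableSpace Ω] (μ : Measure Ω) [IsProbabilityMeasure μ]
    (XC XS ε : Ω → ℝ) (c : ℝ)
    (hIndep : iIndepFun ![XC, XS, ε] μ)
    (hCm : Measurable XC) (hSm : Measurable XS) (hεm : Measurable ε)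
    (hC2 : MemLp XC 2 μ) (hS2 : MemLp XS 2 μ) (hε2 : MemLp ε 2 μ)
    (hCmean : ∫ ω, XC ω ∂μ = 0) (hSmean : ∫ ω, XS ω ∂μ = 0) (hεmean : ∫ ω, ε ω ∂μ = 0)
    (hVarC : 0 < variance XC μ) (hVarS : 0 < variance XS μ)
    (R : ℝ → ℝ → ℝ → ℝ)
    (hR : R = fun se a b =>
      ∫ ω, (c * XC ω + se * XS ω + ε ω - (a * XC ω + b * XS ω)) ^ 2 ∂μ) :
    (∀ a b : ℝ, max (R 1 a b) (R (-1) a b)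
        = (a - c) ^ 2 * variance XC μ + (1 + |b|) ^ 2 * variance XS μ + variance ε μ) ∧
    (∀ a b : ℝ, max (R 1 c 0) (R (-1) c 0) ≤ max (R 1 a b) (R (-1) a b)) ∧
    (∀ a b : ℝ, max (R 1 a b) (R (-1) a b) = max (R 1 c 0) (R (-1) c 0) →
      a = c ∧ b = 0) :=
  stmt8_general μ XC XS ε c hIndep hC2 hS2 hε2 hCmean hSmean hεmean hVarC hVarS R hR
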